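/- Let φ_1,…,φ_r be symmetric polynomials of the shape φ_j(z) = a_j σ_{k_j}(z) − Υ_j(σ_{l_1}(z),…,σ_{l_R}(z)) with a_j nonzero integers and Υ_j ∈ ℤ[s_1,…,s_R]. Suppose x, y ∈ ℤ^k satisfy φ_j(x) = φ_j(y) for 1 ≤ j ≤ r, and set h = (σ_{l_1}(x),…,σ_{l_R}(x)) and g = (σ_{l_1}(y),…,σ_{l_R}(y)). Then one has the polynomial identity in t: A·(∏_{i=1}^k (t + x_i) − ∏_{i=1}^k (t + y_i)) = Ψ(t;h) − Ψ(t;g). -/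

import Mathlib

open Finset Asymptotics Filter

/-- The elementary symmetric polynomial `σ_l` evaluated at the integer tuple `x`. -/
def esymm (k l : ℕ) (x : Fin k → ℤ) : ℤ :=
  ∑ s ∈ Finset.powersetCard l (Finset.univ : Finset (Fin k)), ∏ i ∈ s, x i

/-- The number of pairs `(x, y)` of integer `k`-tuples with all entries in `[1, X]`
satisfying the relation `P`. -/
noncomputable def pairCount (k X : ℕ) (P : (Fin k → ℤ) → (Fin k → ℤ) → Prop) : ℕ :=
  Nat.card {p : (Fin k → ℤ) × (Fin k → ℤ) //
    (∀ i, 1 ≤ p.1 i ∧ p.1 i ≤ (X : ℤ)) ∧ (∀ i, 1 ≤ p.2 i ∧ p.2 i ≤ (X : ℤ)) ∧ P p.1 p.2}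

/-- `T_k(X)`: the number of pairs `(x, y)` of integer `k`-tuples with entries in `[1, X]`
for which `y` is a permutation of `x`. -/
noncomputable def permCount (k X : ℕ) : ℕ :=
  pairCount k X (fun x y => ∃ π : Equiv.Perm (Fin k), y = x ∘ π)

/-- The complementary set of exponents `ℛ = {1,…,k} \ {k_1,…,k_r}`. -/
def compSet (k r : ℕ) (kk : Fin r → ℕ) : Finset ℕ :=
  Finset.Icc 1 k \ Finset.image kk Finset.univ

/-- The auxiliary polynomial `Ψ(t; e) = A Σ_{m} e_m t^{k−l_m} + Σ_j c_j t^{k−k_j} Υ_j(e)`,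
where `A = a_1 ⋯ a_r` and `c_j = A / a_j`. -/
noncomputable def PsiN (k r : ℕ) (kk : Fin r → ℕ) (a : Fin r → ℤ)
    (Υ : Fin r → MvPolynomial {l // l ∈ compSet k r kk} ℤ)
    (e : {l // l ∈ compSet k r kk} → ℤ) (t : ℤ) : ℤ :=
  (∏ j, a j) * (∑ l : {l // l ∈ compSet k r kk}, e l * t ^ (k - l.1)) +
    ∑ j, (∏ i ∈ Finset.univ.erase j, a i) * t ^ (k - kk j) * MvPolynomial.eval e (Υ j)

/-!
By Vieta, `A (∏ (t + x_i) - ∏ (t + y_i)) = A ∑_{l=1}^k (σ_l(x) - σ_l(y)) t^{k-l}`. The terms with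
`l ∈ ℛ` form the first sum of `Ψ(t;h) - Ψ(t;g)`. For `l = k_j` the relation `φ_j(x) = φ_j(y)`
reads `a_j (σ_{k_j}(x) - σ_{k_j}(y)) = Υ_j(h) - Υ_j(g)`, and `A = c_j a_j` turns these terms into
the second sum.
-/

theorem esymm_eq_multiset_esymm (k l : ℕ) (x : Fin k → ℤ) :
    esymm k l x = (univ.val.map x).esymm l :=
  (esymm_map_val x _ l).symm

theorem prod_add_eq_sum_esymm (k : ℕ) (x : Fin k → ℤ) (t : ℤ) :
    ∏ i, (t + x i) = ∑ l ∈ range (k + 1), esymm k l x * t ^ (k - l) := by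
  have vieta := congrArg (Polynomial.eval t)
    (Multiset.prod_X_add_C_eq_sum_esymm (univ.val.map x))
  simp only [Polynomial.eval_multiset_prod, Multiset.map_map, Function.comp_def,
    Polynomial.eval_finsetSum, Polynomial.eval_add, Polynomial.eval_X, Polynomial.eval_C,
    Polynomial.eval_mul, Polynomial.eval_pow, Multiset.card_map, card_val, card_univ,
    Fintype.card_fin] at vieta
  simpa only [prod_eq_multiset_prod, esymm_eq_multiset_esymm] using vieta

theorem esymm_eq_of_notMem_Icc {k l : ℕ} (hl : l ∉ Icc 1 k) (x y : Fin k → ℤ) :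
    esymm k l x = esymm k l y := by
  rcases Nat.eq_zero_or_pos l with rfl | hpos
  · simp [esymm]
  · have hkl : k < l := by simp only [mem_Icc, not_and, not_le] at hl; exact hl hpos
    have hempty : powersetCard l (univ : Finset (Fin k)) = ∅ :=
      powersetCard_eq_empty.mpr (by simpa using hkl)
    simp [esymm, hempty]

theorem prod_add_sub_prod_add (k : ℕ) (x y : Fin k → ℤ) (t : ℤ) :
    ∏ i, (t + x i) - ∏ i, (t + y i) =
      ∑ l ∈ Icc 1 k, (esymm k l x - esymm k l y) * t ^ (k - l) := by
  rw [prod_add_eq_sum_esymm, prod_add_eq_sum_esymm, ← sum_sub_distrib]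
  simp_rw [← sub_mul]
  refine (sum_subset (fun l hl => ?_) fun l _ hl => ?_).symm
  · simp only [mem_Icc, mem_range] at hl ⊢; omega
  · rw [esymm_eq_of_notMem_Icc hl x y, sub_self, zero_mul]

theorem sum_sdiff_image_add_sum_comp_of_injective {ι α M : Type*} [Fintype ι] [DecidableEq α]
    [AddCommMonoid M] {s : Finset α} {f : α → M} (hf : ∀ a ∉ s, f a = 0) {v : ι → α}
    (hv : Function.Injective v) :
    ∑ a ∈ s \ image v univ, f a + ∑ i, f (v i) = ∑ a ∈ s, f a := by
  have hinter : ∑ a ∈ s ∩ image v univ, f a = ∑ a ∈ image v univ, f a :=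
    sum_subset inter_subset_right fun a hv hs => hf a fun ha => hs (mem_inter.2 ⟨ha, hv⟩)
  rw [← sum_image fun i _ j _ hij => hv hij, ← hinter, add_comm, sum_inter_add_sum_sdiff]

theorem PsiN_sub (k r : ℕ) (kk : Fin r → ℕ) (a : Fin r → ℤ)
    (Υ : Fin r → MvPolynomial {l // l ∈ compSet k r kk} ℤ)
    (e e' : {l // l ∈ compSet k r kk} → ℤ) (t : ℤ) :
    PsiN k r kk a Υ e t - PsiN k r kk a Υ e' t =
      (∏ j, a j) * ∑ l : {l // l ∈ compSet k r kk}, (e l - e' l) * t ^ (k - l.1) +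
        ∑ j, (∏ i ∈ univ.erase j, a i) * t ^ (k - kk j) *
          (MvPolynomial.eval e (Υ j) - MvPolynomial.eval e' (Υ j)) := by
  simp only [PsiN, sub_mul, mul_sub, sum_sub_distrib]
  ring

theorem multiplicative_relation_nonlinear_general (k r : ℕ) (kk : Fin r → ℕ)
    (hmono : StrictMono kk)
    (a : Fin r → ℤ)
    (Υ : Fin r → MvPolynomial {l // l ∈ compSet k r kk} ℤ)
    (x y : Fin k → ℤ)
    (heq : ∀ j,
      a j * esymm k (kk j) x - MvPolynomial.eval (fun l => esymm k l.1 x) (Υ j) =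
        a j * esymm k (kk j) y - MvPolynomial.eval (fun l => esymm k l.1 y) (Υ j))
    (h g : {l // l ∈ compSet k r kk} → ℤ)
    (hh : ∀ l, h l = esymm k l.1 x) (hg : ∀ l, g l = esymm k l.1 y) :
    ∀ t : ℤ,
      (∏ j, a j) * ((∏ i, (t + x i)) - ∏ i, (t + y i)) =
        PsiN k r kk a Υ h t - PsiN k r kk a Υ g t := by
  intro t
  have hΥ : ∀ j, MvPolynomial.eval h (Υ j) - MvPolynomial.eval g (Υ j) =
      a j * (esymm k (kk j) x - esymm k (kk j) y) := by
    intro j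
    rw [funext hh, funext hg]
    linarith [heq j]
  rw [PsiN_sub, prod_add_sub_prod_add, ← sum_sdiff_image_add_sum_comp_of_injective
    (f := fun l => (esymm k l x - esymm k l y) * t ^ (k - l))
    (fun l hl => by rw [esymm_eq_of_notMem_Icc hl x y, sub_self, zero_mul]) hmono.injective]
  rw [show Icc 1 k \ image kk univ = compSet k r kk from rfl, ← sum_coe_sort]
  simp only [hh, hg, hΥ, mul_add, mul_sum]
  congr 1
  refine sum_congr rfl fun j _ => ?_
  rw [← prod_erase_mul _ _ (mem_univ j)]
  ring

/-- The identity (3.4). If `x, y ∈ ℤ^k` satisfy `φ_j(x) = φ_j(y)` for `1 ≤ j ≤ r`, where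
`φ_j(z) = a_j σ_{k_j}(z) − Υ_j(σ_{l_1}(z),…,σ_{l_R}(z))`, and
`h = (σ_{l_1}(x),…,σ_{l_R}(x))`, `g = (σ_{l_1}(y),…,σ_{l_R}(y))`, then
`A (∏_{i=1}^k (t + x_i) − ∏_{i=1}^k (t + y_i)) = Ψ(t;h) − Ψ(t;g)` identically in `t`. -/
theorem multiplicative_relation_nonlinear (k r : ℕ) (hr : 0 < r) (kk : Fin r → ℕ)
    (hmono : StrictMono kk) (hfirst : 1 ≤ kk ⟨0, hr⟩)
    (hlast : kk ⟨r - 1, Nat.sub_lt hr Nat.one_pos⟩ = k)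
    (a : Fin r → ℤ) (ha : ∀ j, a j ≠ 0)
    (Υ : Fin r → MvPolynomial {l // l ∈ compSet k r kk} ℤ)
    (x y : Fin k → ℤ)
    (heq : ∀ j,
      a j * esymm k (kk j) x - MvPolynomial.eval (fun l => esymm k l.1 x) (Υ j) =
        a j * esymm k (kk j) y - MvPolynomial.eval (fun l => esymm k l.1 y) (Υ j))
    (h g : {l // l ∈ compSet k r kk} → ℤ)
    (hh : ∀ l, h l = esymm k l.1 x) (hg : ∀ l, g l = esymm k l.1 y) :
    ∀ t : ℤ,
      (∏ j, a j) * ((∏ i, (t + x i)) - ∏ i, (t + y i)) =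
        PsiN k r kk a Υ h t - PsiN k r kk a Υ g t :=
  multiplicative_relation_nonlinear_general k r kk hmono a Υ x y heq h g hh hg
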